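/- For v = (v₁,v₂) ∈ ℝ², let h = 1 + v₁² + v₂² and let A(v) be the 3 × 3 real matrix with rows (½(1 + v₂² − v₁²), −v₁v₂, −v₁), (−v₁v₂, ½(1 + v₁² − v₂²), −v₂), and (−v₁, −v₂, ½(−1 + v₁² + v₂²)). Then for every v ∈ ℝ², the characteristic polynomial of A(v) equals (X + h/2)(X − h/2)², i.e. the eigenvalues of A(v) are −h/2 and h/2 (the latter with multiplicity two); in particular det A(v) = −h³/8 ≠ 0, and for every (f₁,f₂) ∈ ℝ² the linear system A(v)·H = (f₁, f₂, −h/2) has a unique solution H ∈ ℝ³. -/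
import Mathlib

/-- The coefficient matrix `A(v)` of the reduced linear algebraic system. -/
noncomputable def Amat (v : Fin 2 → ℝ) : Matrix (Fin 3) (Fin 3) ℝ :=
  !![(1 + v 1 ^ 2 - v 0 ^ 2) / 2, -(v 0 * v 1), -(v 0);
     -(v 0 * v 1), (1 + v 0 ^ 2 - v 1 ^ 2) / 2, -(v 1);
     -(v 0), -(v 1), (-1 + v 0 ^ 2 + v 1 ^ 2) / 2]

open Polynomial Matrix

lemma charpoly_Amat (v : Fin 2 → ℝ) :
    (Amat v).charpoly =
      (X + C ((1 + v 0 ^ 2 + v 1 ^ 2) / 2))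
        * (X - C ((1 + v 0 ^ 2 + v 1 ^ 2) / 2)) ^ 2 := by
  apply Polynomial.funext
  intro r
  rw [Matrix.charpoly, Matrix.det_fin_three]
  simp [charmatrix_apply, Amat, Matrix.one_apply, Fin.isValue]
  ring

lemma det_Amat (v : Fin 2 → ℝ) :
    (Amat v).det = -(1 + v 0 ^ 2 + v 1 ^ 2) ^ 3 / 8 := by
  rw [Matrix.det_fin_three]
  simp [Amat]
  ring

lemma det_Amat_ne (v : Fin 2 → ℝ) : (Amat v).det ≠ 0 := by
  rw [det_Amat]
  have h : (0:ℝ) < 1 + v 0 ^ 2 + v 1 ^ 2 := by positivity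
  intro hc
  have : (1 + v 0 ^ 2 + v 1 ^ 2) ^ 3 = 0 := by linarith
  nlinarith [pow_pos h 3]

/-- The characteristic polynomial of `A(v)` is `(X + h/2)(X − h/2)²` with
`h = 1 + v₁² + v₂²`; in particular `det A(v) = −h³/8 ≠ 0` and the linear system
`A(v)H = (f₁, f₂, −h/2)` is uniquely solvable. -/
theorem statement7 (v : Fin 2 → ℝ) :
    (Amat v).charpoly =
      (Polynomial.X + Polynomial.C ((1 + v 0 ^ 2 + v 1 ^ 2) / 2))
        * (Polynomial.X - Polynomial.C ((1 + v 0 ^ 2 + v 1 ^ 2) / 2)) ^ 2 ∧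
    (Amat v).det = -(1 + v 0 ^ 2 + v 1 ^ 2) ^ 3 / 8 ∧
    (Amat v).det ≠ 0 ∧
    ∀ f₁ f₂ : ℝ, ∃! H : Fin 3 → ℝ,
      (Amat v).mulVec H = ![f₁, f₂, -(1 + v 0 ^ 2 + v 1 ^ 2) / 2] := by
  have hdet := det_Amat_ne v
  have hA : IsUnit (Amat v).det := isUnit_iff_ne_zero.mpr hdet
  refine ⟨charpoly_Amat v, det_Amat v, hdet, ?_⟩
  intro f₁ f₂
  set b : Fin 3 → ℝ := ![f₁, f₂, -(1 + v 0 ^ 2 + v 1 ^ 2) / 2]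
  refine ⟨(Amat v)⁻¹.mulVec b, ?_, ?_⟩
  · show (Amat v) *ᵥ ((Amat v)⁻¹ *ᵥ b) = b
    rw [Matrix.mulVec_mulVec, Matrix.mul_nonsing_inv _ hA, Matrix.one_mulVec]
  · intro y hy
    have : (Amat v)⁻¹.mulVec ((Amat v).mulVec y) = (Amat v)⁻¹.mulVec b := by rw [hy]
    rwa [Matrix.mulVec_mulVec, Matrix.nonsing_inv_mul _ hA, Matrix.one_mulVec] at this
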